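/- Suppose the primal and dual condition numbers δ_P and δ_D of the LP are both positive, let (x*, u*) be a primal–dual optimal pair with C_* := max(‖x* − x̄‖, ‖u* − ū‖), and suppose β ≥ 10 C_* / (‖d‖ min(δ_P, δ_D)). Then |c^T x* − c^T x(β)| ≤ (1/β)[25 C_*/(2 δ_P δ_D) + 6 C_*² + √6 ‖x̄‖ C_*]. -/

import Mathlib

open Matrix Finset MeasureTheory ProbabilityTheory

/-- Euclidean norm of a finitely-indexed real vector. -/
noncomputable def l2norm {ι : Type*} [Fintype ι] (x : ι → ℝ) : ℝ :=
  Real.sqrt (∑ i, (x i) ^ 2)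

/-- Frobenius norm of a real matrix. -/
noncomputable def frobNorm {ι κ : Type*} [Fintype ι] [Fintype κ] (A : Matrix ι κ ℝ) : ℝ :=
  Real.sqrt (∑ i, ∑ j, (A i j) ^ 2)

/-- Euclidean inner product. -/
noncomputable def rdot {ι : Type*} [Fintype ι] (a b : ι → ℝ) : ℝ := ∑ i, a i * b i

/-- The regularized quadratic penalty objective
`f_β(x) = cᵀx − ūᵀ(Ax−b) + (β/2)‖Ax−b‖² + (1/(2β))‖x−x̄‖²`. -/
noncomputable def fpen {ι κ : Type*} [Fintype ι] [Fintype κ]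
    (A : Matrix ι κ ℝ) (b : ι → ℝ) (c : κ → ℝ) (ub : ι → ℝ) (xb : κ → ℝ)
    (β : ℝ) (x : κ → ℝ) : ℝ :=
  rdot c x - rdot ub (A.mulVec x - b) + (β / 2) * l2norm (A.mulVec x - b) ^ 2
    + (1 / (2 * β)) * l2norm (x - xb) ^ 2

/-- Feasibility of the standard-form primal LP `Ax = b, x ≥ 0`. -/
def PrimalFeasible {ι κ : Type*} [Fintype ι] [Fintype κ]
    (A : Matrix ι κ ℝ) (b : ι → ℝ) : Prop :=
  ∃ x : κ → ℝ, (∀ j, 0 ≤ x j) ∧ A.mulVec x = b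

/-- Feasibility of the dual LP `Aᵀu ≤ c`. -/
def DualFeasible {ι κ : Type*} [Fintype ι] [Fintype κ]
    (A : Matrix ι κ ℝ) (c : κ → ℝ) : Prop :=
  ∃ u : ι → ℝ, ∀ j, Aᵀ.mulVec u j ≤ c j

/-- Norm of the data `d = (A, b, c)`: `max(‖A‖_F, ‖b‖₂, ‖c‖₂)`. -/
noncomputable def dnorm {ι κ : Type*} [Fintype ι] [Fintype κ]
    (A : Matrix ι κ ℝ) (b : ι → ℝ) (c : κ → ℝ) : ℝ :=
  max (frobNorm A) (max (l2norm b) (l2norm c))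

/-- Distance of the data to primal infeasibility. -/
noncomputable def distPri {ι κ : Type*} [Fintype ι] [Fintype κ]
    (A : Matrix ι κ ℝ) (b : ι → ℝ) (c : κ → ℝ) : ℝ :=
  sInf { r : ℝ | ∃ (dA : Matrix ι κ ℝ) (db : ι → ℝ) (dc : κ → ℝ),
    ¬ PrimalFeasible (A + dA) (b + db) ∧ r = dnorm dA db dc }

/-- Distance of the data to dual infeasibility. -/
noncomputable def distDual {ι κ : Type*} [Fintype ι] [Fintype κ]
    (A : Matrix ι κ ℝ) (b : ι → ℝ) (c : κ → ℝ) : ℝ :=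
  sInf { r : ℝ | ∃ (dA : Matrix ι κ ℝ) (db : ι → ℝ) (dc : κ → ℝ),
    ¬ DualFeasible (A + dA) (c + dc) ∧ r = dnorm dA db dc }

/-- Renegar primal condition number `δ_P`. -/
noncomputable def deltaP {ι κ : Type*} [Fintype ι] [Fintype κ]
    (A : Matrix ι κ ℝ) (b : ι → ℝ) (c : κ → ℝ) : ℝ := distPri A b c / dnorm A b c

/-- Renegar dual condition number `δ_D`. -/
noncomputable def deltaD {ι κ : Type*} [Fintype ι] [Fintype κ]
    (A : Matrix ι κ ℝ) (b : ι → ℝ) (c : κ → ℝ) : ℝ := distDual A b c / dnorm A b c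


/-!
Two estimates combine. First, a Renegar-type bound on the dual optimum: a rank-one change of `A`
built from `u*` (resp. `x*`) makes the primal (resp. dual) problem infeasible, which bounds
`‖u*‖ · dist(d, Pri∅)` by `max(‖c‖, 2 max(0, -bᵀu*))` and `‖x*‖ · dist(d, Dual∅)` by `‖b‖`;
together `‖u*‖ δ_P δ_D ≤ 2`. Second, the penalty estimate: with `r = A x(β) - b`, comparing
`f_β(x(β)) ≤ f_β(x*)` with the Lagrangian bound `cᵀx(β) ≥ cᵀx* + u*ᵀr` gives
`(β/2)‖r‖² ≤ C_*²/(2β) + C_*‖r‖`, so `β‖r‖ ≤ 3C_*`, and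
`|cᵀx* - cᵀx(β)| ≤ C_*²/(2β) + (C_* + ‖u*‖)‖r‖ ≤ (7C_*²/2 + 6C_*/(δ_P δ_D))/β`.
-/

section Euclidean

variable {ι κ : Type*} [Fintype ι] [Fintype κ]

theorem rdot_eq_dotProduct (x y : ι → ℝ) : rdot x y = x ⬝ᵥ y := rfl

theorem l2norm_eq_norm (x : ι → ℝ) : l2norm x = ‖WithLp.toLp 2 x‖ := by
  simp [l2norm, EuclideanSpace.norm_eq]

theorem l2norm_nonneg (x : ι → ℝ) : 0 ≤ l2norm x := Real.sqrt_nonneg _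

theorem l2norm_sq (x : ι → ℝ) : l2norm x ^ 2 = x ⬝ᵥ x := by
  rw [l2norm, Real.sq_sqrt (Finset.sum_nonneg fun i _ => sq_nonneg _)]
  simp [dotProduct, sq]

@[simp] theorem l2norm_zero : l2norm (0 : ι → ℝ) = 0 := by simp [l2norm]

theorem l2norm_pos {x : ι → ℝ} (hx : x ≠ 0) : 0 < l2norm x := by
  rw [l2norm_eq_norm]
  exact norm_pos_iff.mpr fun h => hx (congrArg WithLp.ofLp h)

theorem l2norm_smul (t : ℝ) (x : ι → ℝ) : l2norm (t • x) = |t| * l2norm x := by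
  rw [l2norm_eq_norm, l2norm_eq_norm, WithLp.toLp_smul, norm_smul, Real.norm_eq_abs]

theorem l2norm_neg (x : ι → ℝ) : l2norm (-x) = l2norm x := by
  rw [l2norm_eq_norm, l2norm_eq_norm, WithLp.toLp_neg, norm_neg]

theorem l2norm_sub_comm (x y : ι → ℝ) : l2norm (x - y) = l2norm (y - x) := by
  rw [l2norm_eq_norm, l2norm_eq_norm, WithLp.toLp_sub, WithLp.toLp_sub, norm_sub_rev]

theorem l2norm_add_le (x y : ι → ℝ) : l2norm (x + y) ≤ l2norm x + l2norm y := by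
  simpa only [l2norm_eq_norm, WithLp.toLp_add] using norm_add_le _ _

theorem l2norm_single [DecidableEq ι] (i : ι) (t : ℝ) : l2norm (Pi.single i t) = |t| := by
  rw [l2norm_eq_norm, PiLp.toLp_single, PiLp.norm_single, Real.norm_eq_abs]

theorem abs_dotProduct_le (x y : ι → ℝ) : |x ⬝ᵥ y| ≤ l2norm x * l2norm y := by
  have h := abs_real_inner_le_norm (WithLp.toLp 2 y) (WithLp.toLp 2 x)
  rwa [EuclideanSpace.inner_eq_star_dotProduct, star_trivial, mul_comm,
    ← l2norm_eq_norm, ← l2norm_eq_norm] at h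

theorem dotProduct_le_mul_l2norm {x : ι → ℝ} {C : ℝ} (hx : l2norm x ≤ C) (y : ι → ℝ) :
    x ⬝ᵥ y ≤ C * l2norm y :=
  (le_abs_self _).trans <| (abs_dotProduct_le x y).trans <|
    mul_le_mul_of_nonneg_right hx (l2norm_nonneg y)

theorem frobNorm_nonneg (M : Matrix ι κ ℝ) : 0 ≤ frobNorm M := Real.sqrt_nonneg _

theorem frobNorm_neg (M : Matrix ι κ ℝ) : frobNorm (-M) = frobNorm M := by
  simp [frobNorm]

theorem frobNorm_vecMulVec (u : ι → ℝ) (v : κ → ℝ) :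
    frobNorm (vecMulVec u v) = l2norm u * l2norm v := by
  rw [frobNorm, l2norm, l2norm, ← Real.sqrt_mul (Finset.sum_nonneg fun i _ => sq_nonneg _),
    Finset.sum_mul_sum]
  simp only [vecMulVec_apply, mul_pow]

end Euclidean

section Distance

variable {ι κ : Type*} [Fintype ι] [Fintype κ]

theorem dotProduct_mulVec_le_of_dualFeasible {A : Matrix ι κ ℝ} {c : κ → ℝ} {u : ι → ℝ}
    {x : κ → ℝ} (hu : ∀ j, (Aᵀ *ᵥ u) j ≤ c j) (hx : ∀ j, 0 ≤ x j) :
    u ⬝ᵥ A *ᵥ x ≤ c ⬝ᵥ x := by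
  rw [dotProduct_mulVec, ← mulVec_transpose]
  exact dotProduct_le_dotProduct_of_nonneg_right hu hx

theorem dnorm_nonneg (A : Matrix ι κ ℝ) (b : ι → ℝ) (c : κ → ℝ) : 0 ≤ dnorm A b c :=
  (frobNorm_nonneg A).trans (le_max_left _ _)

theorem distPri_le {A : Matrix ι κ ℝ} {b : ι → ℝ} (c : κ → ℝ) {dA : Matrix ι κ ℝ} {db : ι → ℝ}
    (dc : κ → ℝ) (h : ¬ PrimalFeasible (A + dA) (b + db)) :
    distPri A b c ≤ dnorm dA db dc :=
  csInf_le ⟨0, fun _ ⟨dA, db, dc, _, hr⟩ => hr ▸ dnorm_nonneg dA db dc⟩ ⟨dA, db, dc, h, rfl⟩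

theorem distDual_le {A : Matrix ι κ ℝ} (b : ι → ℝ) {c : κ → ℝ} {dA : Matrix ι κ ℝ} (db : ι → ℝ)
    {dc : κ → ℝ} (h : ¬ DualFeasible (A + dA) (c + dc)) :
    distDual A b c ≤ dnorm dA db dc :=
  csInf_le ⟨0, fun _ ⟨dA, db, dc, _, hr⟩ => hr ▸ dnorm_nonneg dA db dc⟩ ⟨dA, db, dc, h, rfl⟩

theorem distDual_nonneg (A : Matrix ι κ ℝ) (b : ι → ℝ) (c : κ → ℝ) : 0 ≤ distDual A b c :=
  Real.sInf_nonneg fun _ ⟨dA, db, dc, _, hr⟩ => hr ▸ dnorm_nonneg dA db dc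

/-- Replacing `A` by `0` and lowering one cost entry below `0` makes the dual infeasible. -/
theorem distDual_le_dnorm (A : Matrix ι κ ℝ) (b : ι → ℝ) (c : κ → ℝ) :
    distDual A b c ≤ dnorm A b c := by
  classical
  cases isEmpty_or_nonempty κ
  · have hempty : {r : ℝ | ∃ (dA : Matrix ι κ ℝ) (db : ι → ℝ) (dc : κ → ℝ),
        ¬ DualFeasible (A + dA) (c + dc) ∧ r = dnorm dA db dc} = ∅ :=
      Set.eq_empty_of_forall_notMem fun _ ⟨_, _, _, hinf, _⟩ => hinf ⟨0, isEmptyElim⟩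
    rw [distDual, hempty, Real.sInf_empty]
    exact dnorm_nonneg A b c
  refine le_of_forall_pos_le_add fun t ht => ?_
  obtain ⟨j⟩ : Nonempty κ := inferInstance
  have hinf : ¬ DualFeasible (A + -A) (c + (-c - Pi.single j t)) := by
    rintro ⟨u, hu⟩
    have := hu j
    simp only [add_neg_cancel, transpose_zero, zero_mulVec, Pi.zero_apply, Pi.add_apply,
      Pi.sub_apply, Pi.neg_apply, Pi.single_eq_same] at this
    linarith
  have hA : frobNorm A ≤ dnorm A b c := le_max_left _ _
  have hc : l2norm c ≤ dnorm A b c := (le_max_right _ _).trans (le_max_right _ _)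
  refine (distDual_le b 0 hinf).trans (max_le ?_ (max_le ?_ ?_))
  · rw [frobNorm_neg]; linarith
  · rw [l2norm_zero]; linarith [dnorm_nonneg A b c]
  · calc l2norm (-c - Pi.single j t) ≤ l2norm (-c) + l2norm (-Pi.single j t) := by
          rw [sub_eq_add_neg]; exact l2norm_add_le _ _
      _ = l2norm c + t := by rw [l2norm_neg, l2norm_neg, l2norm_single, abs_of_pos ht]
      _ ≤ dnorm A b c + t := by linarith

end Distance

section Perturbation

variable {ι κ : Type*} [Fintype ι] [Fintype κ] {A : Matrix ι κ ℝ} {b : ι → ℝ} {c : κ → ℝ}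

/-- Farkas: after the rank-one change `A ↦ A - u cᵀ / ‖u‖²`, `b ↦ b + ε u`, the vector `u`
certifies primal infeasibility. -/
theorem distPri_le_of_dual_ray {u : ι → ℝ} (hu : u ≠ 0) (hAu : ∀ j, (Aᵀ *ᵥ u) j ≤ c j)
    {ε : ℝ} (hε : 0 ≤ ε) (hpos : 0 < u ⬝ᵥ b + ε * l2norm u ^ 2) :
    distPri A b c ≤ max (l2norm c / l2norm u) (ε * l2norm u) := by
  have hu₀ := l2norm_pos hu
  set dA := vecMulVec u (-(l2norm u ^ 2)⁻¹ • c)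
  have hT : (A + dA)ᵀ *ᵥ u = Aᵀ *ᵥ u - c := by
    rw [transpose_add, add_mulVec, mulVec_transpose dA, vecMul_vecMulVec, ← l2norm_sq, smul_smul,
      mul_neg, mul_inv_cancel₀ (by positivity), neg_one_smul, sub_eq_add_neg]
  have hinf : ¬ PrimalFeasible (A + dA) (b + ε • u) := by
    rintro ⟨x, hx, hAx⟩
    have h := dotProduct_mulVec_le_of_dualFeasible (A := A + dA) (c := 0)
      (fun j => by rw [hT, Pi.sub_apply, Pi.zero_apply]; linarith [hAu j]) hx
    rw [hAx, zero_dotProduct, dotProduct_add, dotProduct_smul, ← l2norm_sq, smul_eq_mul] at h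
    linarith
  refine (distPri_le c 0 hinf).trans_eq ?_
  rw [dnorm, l2norm_zero, l2norm_smul, abs_of_nonneg hε, max_eq_left (mul_nonneg hε hu₀.le),
    frobNorm_vecMulVec, l2norm_smul, abs_neg, abs_inv, abs_of_pos (by positivity)]
  congr 1
  field_simp

/-- Moving `A` by the rank-one matrix `-b xᵀ / ‖x‖²` puts `x` in the kernel, and then `cᵀx < 0`
rules out dual feasibility. -/
theorem l2norm_mul_distDual_le {x : κ → ℝ} (hx : ∀ j, 0 ≤ x j) (hAx : A *ᵥ x = b)
    (hcx : c ⬝ᵥ x < 0) : l2norm x * distDual A b c ≤ l2norm b := by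
  have hx₀ : x ≠ 0 := by rintro rfl; simp at hcx
  have hx₁ := l2norm_pos hx₀
  set dA := vecMulVec (-(l2norm x ^ 2)⁻¹ • b) x
  have hker : (A + dA) *ᵥ x = 0 := by
    rw [add_mulVec, hAx, vecMulVec_mulVec, ← l2norm_sq, op_smul_eq_smul, smul_smul, mul_neg,
      mul_inv_cancel₀ (by positivity), neg_one_smul, add_neg_cancel]
  have hinf : ¬ DualFeasible (A + dA) (c + 0) := by
    rintro ⟨u, hu⟩
    have h := dotProduct_mulVec_le_of_dualFeasible (A := A + dA)
      (by simpa only [add_zero] using hu) hx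
    rw [hker, dotProduct_zero] at h
    linarith
  have hd : dnorm dA 0 0 = l2norm b / l2norm x := by
    rw [dnorm, l2norm_zero, l2norm_zero, max_self, max_eq_left (frobNorm_nonneg _),
      frobNorm_vecMulVec, l2norm_smul, abs_neg, abs_inv, abs_of_pos (by positivity)]
    field_simp
  have h := (distDual_le b 0 hinf).trans_eq hd
  rw [le_div_iff₀ hx₁] at h
  linarith

end Perturbation

section DualBound

variable {ι κ : Type*} [Fintype ι] [Fintype κ] {A : Matrix ι κ ℝ} {b : ι → ℝ} {c : κ → ℝ}

theorem l2norm_mul_distPri_le {u : ι → ℝ} (hAu : ∀ j, (Aᵀ *ᵥ u) j ≤ c j) :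
    l2norm u * distPri A b c ≤ max (l2norm c) (2 * max 0 (-(u ⬝ᵥ b))) := by
  set P := distPri A b c
  set t := max 0 (-(u ⬝ᵥ b))
  have ht : 0 ≤ t := le_max_left _ _
  have hbt : -(u ⬝ᵥ b) ≤ t := le_max_right _ _
  rcases eq_or_ne u 0 with rfl | hu
  · rw [l2norm_zero, zero_mul]; exact le_max_of_le_right (by positivity)
  rcases le_or_gt P 0 with hP | hP
  · exact (mul_nonpos_of_nonneg_of_nonpos (l2norm_nonneg u) hP).trans
      (le_max_of_le_right (by positivity))
  set ν := l2norm u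
  have hν : 0 < ν := l2norm_pos hu
  -- `ε` is chosen so that `uᵀ(b + εu) > 0` while `ε‖u‖ = t/‖u‖ + P/2`.
  have hpos : 0 < u ⬝ᵥ b + (t / ν ^ 2 + P / (2 * ν)) * ν ^ 2 := by
    rw [add_mul, div_mul_cancel₀ _ (by positivity)]
    have : 0 < P / (2 * ν) * ν ^ 2 := by positivity
    linarith
  have h := distPri_le_of_dual_ray hu hAu (by positivity) hpos
  have hε : (t / ν ^ 2 + P / (2 * ν)) * ν = t / ν + P / 2 := by field_simp
  rw [hε] at h
  rcases le_max_iff.mp h with h | h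
  · exact le_max_of_le_left (by rw [le_div_iff₀ hν] at h; linarith)
  · refine le_max_of_le_right ?_
    have : P / 2 * ν ≤ t := by rw [← le_div_iff₀ hν]; linarith
    linarith

theorem l2norm_mul_deltaP_mul_deltaD_le {x : κ → ℝ} {u : ι → ℝ} (hx : ∀ j, 0 ≤ x j)
    (hAx : A *ᵥ x = b) (hAu : ∀ j, (Aᵀ *ᵥ u) j ≤ c j) (hstrong : c ⬝ᵥ x = b ⬝ᵥ u) :
    l2norm u * (deltaP A b c * deltaD A b c) ≤ 2 := by
  set N := dnorm A b c
  set D := distDual A b c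
  have hD : 0 ≤ D := distDual_nonneg A b c
  have hDN : D ≤ N := distDual_le_dnorm A b c
  have hbN : l2norm b ≤ N := (le_max_left _ _).trans (le_max_right _ _)
  have hcN : l2norm c ≤ N := (le_max_right _ _).trans (le_max_right _ _)
  have hgap : max 0 (-(u ⬝ᵥ b)) * D ≤ l2norm c * l2norm b := by
    rcases le_or_gt 0 (u ⬝ᵥ b) with h | h
    · rw [max_eq_left (by linarith), zero_mul]
      exact mul_nonneg (l2norm_nonneg c) (l2norm_nonneg b)
    have hcx : c ⬝ᵥ x < 0 := by rwa [hstrong, dotProduct_comm]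
    have hxD := l2norm_mul_distDual_le hx hAx hcx
    have hcx' : -(u ⬝ᵥ b) ≤ l2norm c * l2norm x := by
      rw [dotProduct_comm, ← hstrong]
      exact (neg_le_abs _).trans (abs_dotProduct_le c x)
    rw [max_eq_right (by linarith)]
    calc -(u ⬝ᵥ b) * D ≤ l2norm c * l2norm x * D := by gcongr
      _ ≤ l2norm c * l2norm b := by
          rw [mul_assoc]; exact mul_le_mul_of_nonneg_left hxD (l2norm_nonneg c)
  have hmain : l2norm u * distPri A b c * D ≤ 2 * N ^ 2 :=
    calc l2norm u * distPri A b c * D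
        ≤ max (l2norm c) (2 * max 0 (-(u ⬝ᵥ b))) * D := by
          gcongr; exact l2norm_mul_distPri_le hAu
      _ = max (l2norm c * D) (2 * (max 0 (-(u ⬝ᵥ b)) * D)) := by
          rw [max_mul_of_nonneg _ _ hD, mul_assoc]
      _ ≤ 2 * N ^ 2 := by
          refine max_le ?_ ?_
          · nlinarith [l2norm_nonneg c]
          · nlinarith [l2norm_nonneg c, l2norm_nonneg b]
  rw [deltaP, deltaD, div_mul_div_comm, ← sq, ← mul_div_assoc, ← mul_assoc]
  exact div_le_of_le_mul₀ (sq_nonneg N) zero_le_two hmain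

end DualBound

section Penalty

variable {ι κ : Type*} [Fintype ι] [Fintype κ] {A : Matrix ι κ ℝ} {b : ι → ℝ} {c : κ → ℝ}
  {ub : ι → ℝ} {xb : κ → ℝ} {β Cs : ℝ} {xs xβ : κ → ℝ} {us : ι → ℝ}

theorem objective_add_dotProduct_residual_le (hAu : ∀ j, (Aᵀ *ᵥ us) j ≤ c j)
    (hstrong : c ⬝ᵥ xs = b ⬝ᵥ us) (hxβ : ∀ j, 0 ≤ xβ j) :
    c ⬝ᵥ xs + us ⬝ᵥ (A *ᵥ xβ - b) ≤ c ⬝ᵥ xβ := by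
  have h := dotProduct_mulVec_le_of_dualFeasible hAu hxβ
  rw [dotProduct_sub, hstrong, dotProduct_comm b]
  linarith

theorem augmented_lagrangian_le_of_fpen_le (hβ : 0 < β) (hAx : A *ᵥ xs = b)
    (hxC : l2norm (xs - xb) ≤ Cs) (hmin : fpen A b c ub xb β xβ ≤ fpen A b c ub xb β xs) :
    c ⬝ᵥ xβ - ub ⬝ᵥ (A *ᵥ xβ - b) + β / 2 * l2norm (A *ᵥ xβ - b) ^ 2
      ≤ c ⬝ᵥ xs + Cs ^ 2 / (2 * β) := by
  have hsq : l2norm (xs - xb) ^ 2 ≤ Cs ^ 2 := pow_le_pow_left₀ (l2norm_nonneg _) hxC 2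
  have hreg : 0 ≤ 1 / (2 * β) * l2norm (xβ - xb) ^ 2 := by positivity
  simp only [fpen, rdot_eq_dotProduct, hAx, sub_self, dotProduct_zero, l2norm_zero] at hmin
  have : 1 / (2 * β) * l2norm (xs - xb) ^ 2 ≤ Cs ^ 2 / (2 * β) := by
    rw [one_div_mul_eq_div]; gcongr
  linarith

theorem penalty_residual_le (hβ : 0 < β) (hAx : A *ᵥ xs = b) (hAu : ∀ j, (Aᵀ *ᵥ us) j ≤ c j)
    (hstrong : c ⬝ᵥ xs = b ⬝ᵥ us) (hxC : l2norm (xs - xb) ≤ Cs) (huC : l2norm (us - ub) ≤ Cs)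
    (hxβ : ∀ j, 0 ≤ xβ j) (hmin : fpen A b c ub xb β xβ ≤ fpen A b c ub xb β xs) :
    β * l2norm (A *ᵥ xβ - b) ≤ 3 * Cs := by
  set r := A *ᵥ xβ - b
  have hCs : 0 ≤ Cs := (l2norm_nonneg _).trans hxC
  have hup := augmented_lagrangian_le_of_fpen_le hβ hAx hxC hmin
  have hlow := objective_add_dotProduct_residual_le hAu hstrong hxβ
  have hcs := dotProduct_le_mul_l2norm (x := ub - us) (C := Cs) (by rwa [l2norm_sub_comm]) r
  rw [sub_dotProduct] at hcs
  have hquad : (β * l2norm r) ^ 2 ≤ Cs ^ 2 + 2 * Cs * (β * l2norm r) := by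
    have h : β / 2 * l2norm r ^ 2 ≤ Cs ^ 2 / (2 * β) + Cs * l2norm r := by linarith
    have := mul_le_mul_of_nonneg_left h (by positivity : (0 : ℝ) ≤ 2 * β)
    field_simp at this
    nlinarith
  nlinarith [mul_nonneg hβ.le (l2norm_nonneg r)]

theorem penalty_objective_gap_le (hβ : 0 < β) (hAx : A *ᵥ xs = b)
    (hAu : ∀ j, (Aᵀ *ᵥ us) j ≤ c j) (hstrong : c ⬝ᵥ xs = b ⬝ᵥ us)
    (hxC : l2norm (xs - xb) ≤ Cs) (huC : l2norm (us - ub) ≤ Cs) (hxβ : ∀ j, 0 ≤ xβ j)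
    (hmin : fpen A b c ub xb β xβ ≤ fpen A b c ub xb β xs) :
    |c ⬝ᵥ xs - c ⬝ᵥ xβ| ≤ Cs ^ 2 / (2 * β) + (Cs + l2norm us) * l2norm (A *ᵥ xβ - b) := by
  set r := A *ᵥ xβ - b
  have hup := augmented_lagrangian_le_of_fpen_le hβ hAx hxC hmin
  have hlow := objective_add_dotProduct_residual_le hAu hstrong hxβ
  have hcs := dotProduct_le_mul_l2norm (x := ub - us) (C := Cs) (by rwa [l2norm_sub_comm]) r
  rw [sub_dotProduct] at hcs
  have hu := abs_le.mp (abs_dotProduct_le us r)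
  have hpen : 0 ≤ β / 2 * l2norm r ^ 2 := by positivity
  rw [abs_le]
  constructor <;> linarith

end Penalty

theorem qp_penalty_objective_bound_general
    {m n : ℕ} (A : Matrix (Fin m) (Fin n) ℝ) (b : Fin m → ℝ) (c : Fin n → ℝ)
    (ub : Fin m → ℝ) (xb : Fin n → ℝ) (β : ℝ) (hβ : 0 < β)
    (hP : 0 < deltaP A b c) (hD : 0 < deltaD A b c)
    -- (x*, u*) : a primal–dual optimal pair
    (xs : Fin n → ℝ) (us : Fin m → ℝ)
    (hpfeas : A.mulVec xs = b) (hppos : ∀ j, 0 ≤ xs j)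
    (hdfeas : ∀ j, 0 ≤ (c - Aᵀ.mulVec us) j)
    (hstrong : rdot c xs = rdot b us)
    (Cs : ℝ) (hCs : Cs = max (l2norm (xs - xb)) (l2norm (us - ub)))
    -- x(β) : the minimizer of f_β over the nonnegative orthant
    (xβ : Fin n → ℝ) (hβnn : ∀ j, 0 ≤ xβ j)
    (hβmin : ∀ x : Fin n → ℝ, (∀ j, 0 ≤ x j) →
      fpen A b c ub xb β xβ ≤ fpen A b c ub xb β x) :
    |rdot c xs - rdot c xβ| ≤ (1 / β) *
      (25 * Cs / (2 * deltaP A b c * deltaD A b c) + 6 * Cs ^ 2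
        + Real.sqrt 6 * l2norm xb * Cs) := by
  have hxC : l2norm (xs - xb) ≤ Cs := hCs ▸ le_max_left _ _
  have huC : l2norm (us - ub) ≤ Cs := hCs ▸ le_max_right _ _
  have hCs₀ : 0 ≤ Cs := (l2norm_nonneg _).trans hxC
  have hAu : ∀ j, (Aᵀ *ᵥ us) j ≤ c j := fun j => sub_nonneg.mp (hdfeas j)
  rw [rdot_eq_dotProduct, rdot_eq_dotProduct] at hstrong ⊢
  have hgap := penalty_objective_gap_le hβ hpfeas hAu hstrong hxC huC hβnn (hβmin xs hppos)
  have hres := penalty_residual_le hβ hpfeas hAu hstrong hxC huC hβnn (hβmin xs hppos)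
  have hus : l2norm us ≤ 2 / (deltaP A b c * deltaD A b c) := by
    rw [le_div_iff₀ (mul_pos hP hD)]
    exact l2norm_mul_deltaP_mul_deltaD_le hppos hpfeas hAu hstrong
  set K := Cs / (deltaP A b c * deltaD A b c)
  have hK : 0 ≤ K := div_nonneg hCs₀ (mul_pos hP hD).le
  have hβgap : β * |c ⬝ᵥ xs - c ⬝ᵥ xβ| ≤ 7 / 2 * Cs ^ 2 + 6 * K :=
    calc β * |c ⬝ᵥ xs - c ⬝ᵥ xβ|
        ≤ Cs ^ 2 / 2 + (Cs + l2norm us) * (β * l2norm (A *ᵥ xβ - b)) := by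
          have := mul_le_mul_of_nonneg_left hgap hβ.le
          field_simp at this ⊢
          linarith
      _ ≤ Cs ^ 2 / 2 + (Cs + 2 / (deltaP A b c * deltaD A b c)) * (3 * Cs) := by
          have := l2norm_nonneg (A *ᵥ xβ - b)
          gcongr
      _ = 7 / 2 * Cs ^ 2 + 6 * K := by ring
  have hxb : 0 ≤ Real.sqrt 6 * l2norm xb * Cs := by
    have := l2norm_nonneg xb; positivity
  rw [one_div_mul_eq_div, le_div_iff₀ hβ,
    show 25 * Cs / (2 * deltaP A b c * deltaD A b c) = 25 / 2 * K by ring]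
  nlinarith [sq_nonneg Cs]

/-- Corollary mp: bound on `|cᵀx* − cᵀx(β)|` under the lower bound on β. -/
theorem qp_penalty_objective_bound
    {m n : ℕ} (A : Matrix (Fin m) (Fin n) ℝ) (b : Fin m → ℝ) (c : Fin n → ℝ)
    (hrank : A.rank = m)
    (ub : Fin m → ℝ) (xb : Fin n → ℝ) (β : ℝ) (hβ : 0 < β)
    (hP : 0 < deltaP A b c) (hD : 0 < deltaD A b c)
    -- (x*, u*) : a primal–dual optimal pair
    (xs : Fin n → ℝ) (us : Fin m → ℝ)
    (hpfeas : A.mulVec xs = b) (hppos : ∀ j, 0 ≤ xs j)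
    (hdfeas : ∀ j, 0 ≤ (c - Aᵀ.mulVec us) j)
    (hstrong : rdot c xs = rdot b us)
    (Cs : ℝ) (hCs : Cs = max (l2norm (xs - xb)) (l2norm (us - ub)))
    -- x(β) : the minimizer of f_β over the nonnegative orthant
    (xβ : Fin n → ℝ) (hβnn : ∀ j, 0 ≤ xβ j)
    (hβmin : ∀ x : Fin n → ℝ, (∀ j, 0 ≤ x j) →
      fpen A b c ub xb β xβ ≤ fpen A b c ub xb β x)
    -- bound on β
    (hβbig : 10 * Cs / (dnorm A b c * min (deltaP A b c) (deltaD A b c)) ≤ β) :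
    |rdot c xs - rdot c xβ| ≤ (1 / β) *
      (25 * Cs / (2 * deltaP A b c * deltaD A b c) + 6 * Cs ^ 2
        + Real.sqrt 6 * l2norm xb * Cs) :=
  qp_penalty_objective_bound_general A b c ub xb β hβ hP hD xs us hpfeas hppos hdfeas hstrong Cs hCs
    xβ hβnn hβmin
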